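/- arXiv:1905.08168 — 2 statements merged into one kernel-verified Lean document; each statement's English description precedes it below -/
import Mathlib

section
/- Let u : [0,1] × [0,1] → ℝ be continuously differentiable with u_t + u·u_x = 0 on [0,1] × [0,1] and u(0,x) = φ(x). Then for all (t,x) ∈ [0,1] × [0,1], ∫₀ˣ u(t,z) dz − ∫₀ˣ φ(z) dz + (1/2)∫₀ᵗ (u(τ,x))² dτ equals a function of t only, namely (1/2)∫₀ᵗ (u(τ,0))² dτ. -/
/-!
Integrate `u_t = -(u²/2)_x` over the rectangle `[0,t] × [0,x]` in both orders. Integrating first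
in `τ` gives `∫₀ˣ (u(t,z) - φ(z)) dz` by the fundamental theorem of calculus in time; integrating
first in `z` gives `∫₀ᵗ (u(τ,0)² - u(τ,x)²)/2 dτ` by the fundamental theorem of calculus in space.
Fubini's theorem for the continuous integrand `u_t` equates the two.
-/

open Set intervalIntegral MeasureTheory

section Calculus

variable {E : Type*} [NormedAddCommGroup E] [NormedSpace ℝ E]

theorem intervalIntegral.integral_eq_sub_of_hasDerivWithinAt_of_le [CompleteSpace E]
    {f f' : ℝ → E} {a b : ℝ} {s : Set ℝ} (hab : a ≤ b) (hs : Icc a b ⊆ s)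
    (hf : ∀ x ∈ Icc a b, HasDerivWithinAt f (f' x) s x) (hf' : ContinuousOn f' (Icc a b)) :
    ∫ x in a..b, f' x = f b - f a :=
  integral_eq_sub_of_hasDerivAt_of_le hab
    (fun x hx => ((hf x hx).mono hs).continuousWithinAt)
    (fun x hx => ((hf x (Ioo_subset_Icc_self hx)).mono hs).hasDerivAt (Icc_mem_nhds hx.1 hx.2))
    (hf'.intervalIntegrable_of_Icc hab)

theorem intervalIntegral_intervalIntegral_swap_of_continuousOn {F : ℝ → ℝ → E} {a b c d : ℝ}
    (hF : ContinuousOn (Function.uncurry F) (uIcc a b ×ˢ uIcc c d)) :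
    ∫ x in a..b, ∫ y in c..d, F x y = ∫ y in c..d, ∫ x in a..b, F x y :=
  intervalIntegral_intervalIntegral_swap <|
    (hF.integrableOn_compact (isCompact_uIcc.prod isCompact_uIcc)).mono_set
      (prod_mono uIoc_subset_uIcc uIoc_subset_uIcc)

theorem integral_eq_half_sq_sub_of_add_mul_deriv_eq_zero {v v' w : ℝ → ℝ} {a b : ℝ} {s : Set ℝ}
    (hab : a ≤ b) (hs : Icc a b ⊆ s) (hv : ∀ x ∈ Icc a b, HasDerivWithinAt v (v' x) s x)
    (hw : ContinuousOn w (Icc a b)) (h : ∀ x ∈ Icc a b, w x + v x * v' x = 0) :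
    ∫ x in a..b, w x = 1/2 * v a ^ 2 - 1/2 * v b ^ 2 := by
  have hderiv : ∀ x ∈ Icc a b, HasDerivWithinAt (fun y => -(1/2 * v y ^ 2)) (w x) s x :=
    fun x hx => (((hv x hx).pow 2).const_mul (1/2)).neg.congr_deriv (by
      linear_combination -h x hx)
  rw [integral_eq_sub_of_hasDerivWithinAt_of_le hab hs hderiv hw]
  ring

end Calculus

section Burgers

variable {u ut ux : ℝ → ℝ → ℝ} {t x : ℝ}

theorem integral_sub_integral_initial_eq_integral_integral {φ : ℝ → ℝ}
    (hut : ContinuousOn (fun p : ℝ × ℝ => ut p.1 p.2) (Icc 0 1 ×ˢ Icc 0 1))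
    (hdert : ∀ t ∈ Icc (0:ℝ) 1, ∀ x ∈ Icc (0:ℝ) 1,
      HasDerivWithinAt (fun s => u s x) (ut t x) (Icc 0 1) t)
    (hderx : ∀ t ∈ Icc (0:ℝ) 1, ∀ x ∈ Icc (0:ℝ) 1,
      HasDerivWithinAt (fun y => u t y) (ux t x) (Icc 0 1) x)
    (hinit : ∀ x ∈ Icc (0:ℝ) 1, u 0 x = φ x) (ht : t ∈ Icc (0:ℝ) 1) (hx : x ∈ Icc (0:ℝ) 1) :
    (∫ z in (0:ℝ)..x, u t z) - (∫ z in (0:ℝ)..x, φ z)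
      = ∫ z in (0:ℝ)..x, ∫ τ in (0:ℝ)..t, ut τ z := by
  have hsub_x : Icc 0 x ⊆ Icc (0:ℝ) 1 := Icc_subset_Icc_right hx.2
  have hint : ∀ τ ∈ Icc (0:ℝ) 1, IntervalIntegrable (u τ) volume 0 x := fun τ hτ =>
    ((HasDerivWithinAt.continuousOn (hderx τ hτ)).mono hsub_x).intervalIntegrable_of_Icc hx.1
  have hφ : ∫ z in (0:ℝ)..x, φ z = ∫ z in (0:ℝ)..x, u 0 z :=
    integral_congr fun z hz => (hinit z (hsub_x (uIcc_of_le hx.1 ▸ hz))).symm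
  rw [hφ, ← integral_sub (hint t ht) (hint 0 (left_mem_Icc.2 zero_le_one))]
  refine integral_congr fun z hz => ?_
  have hz' : z ∈ Icc (0:ℝ) 1 := hsub_x (uIcc_of_le hx.1 ▸ hz)
  have hsub_t : Icc 0 t ⊆ Icc (0:ℝ) 1 := Icc_subset_Icc_right ht.2
  exact (integral_eq_sub_of_hasDerivWithinAt_of_le ht.1 hsub_t
    (fun τ hτ => hdert τ (hsub_t hτ) z hz') ((hut.uncurry_right z hz').mono hsub_t)).symm

theorem integral_integral_ut_eq_half_integral_sq_sub
    (hut : ContinuousOn (fun p : ℝ × ℝ => ut p.1 p.2) (Icc 0 1 ×ˢ Icc 0 1))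
    (hdert : ∀ t ∈ Icc (0:ℝ) 1, ∀ x ∈ Icc (0:ℝ) 1,
      HasDerivWithinAt (fun s => u s x) (ut t x) (Icc 0 1) t)
    (hderx : ∀ t ∈ Icc (0:ℝ) 1, ∀ x ∈ Icc (0:ℝ) 1,
      HasDerivWithinAt (fun y => u t y) (ux t x) (Icc 0 1) x)
    (hpde : ∀ t ∈ Icc (0:ℝ) 1, ∀ x ∈ Icc (0:ℝ) 1, ut t x + u t x * ux t x = 0)
    (ht : t ∈ Icc (0:ℝ) 1) (hx : x ∈ Icc (0:ℝ) 1) :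
    ∫ τ in (0:ℝ)..t, ∫ z in (0:ℝ)..x, ut τ z
      = 1/2 * (∫ τ in (0:ℝ)..t, u τ 0 ^ 2) - 1/2 * ∫ τ in (0:ℝ)..t, u τ x ^ 2 := by
  have hsub_t : Icc 0 t ⊆ Icc (0:ℝ) 1 := Icc_subset_Icc_right ht.2
  have hsub_x : Icc 0 x ⊆ Icc (0:ℝ) 1 := Icc_subset_Icc_right hx.2
  have hint : ∀ z ∈ Icc (0:ℝ) 1, IntervalIntegrable (fun τ => 1/2 * u τ z ^ 2) volume 0 t :=
    fun z hz => ((((HasDerivWithinAt.continuousOn fun τ hτ => hdert τ hτ z hz).mono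
      hsub_t).pow 2).intervalIntegrable_of_Icc ht.1).const_mul _
  rw [← intervalIntegral.integral_const_mul, ← intervalIntegral.integral_const_mul,
    ← integral_sub (hint 0 (left_mem_Icc.2 zero_le_one)) (hint x hx)]
  refine integral_congr fun τ hτ => ?_
  have hτ' : τ ∈ Icc (0:ℝ) 1 := hsub_t (uIcc_of_le ht.1 ▸ hτ)
  exact integral_eq_half_sq_sub_of_add_mul_deriv_eq_zero hx.1 hsub_x
    (fun z hz => hderx τ hτ' z (hsub_x hz)) ((hut.uncurry_left τ hτ').mono hsub_x)
    (fun z hz => hpde τ hτ' z (hsub_x hz))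

end Burgers


theorem burgers_implies_integral_identity_general
    (u ut ux : ℝ → ℝ → ℝ) (φ : ℝ → ℝ)
    (hut : ContinuousOn (fun p : ℝ × ℝ => ut p.1 p.2) (Icc 0 1 ×ˢ Icc 0 1))
    (hdert : ∀ t ∈ Icc (0:ℝ) 1, ∀ x ∈ Icc (0:ℝ) 1,
      HasDerivWithinAt (fun s => u s x) (ut t x) (Icc 0 1) t)
    (hderx : ∀ t ∈ Icc (0:ℝ) 1, ∀ x ∈ Icc (0:ℝ) 1,
      HasDerivWithinAt (fun y => u t y) (ux t x) (Icc 0 1) x)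
    (hpde : ∀ t ∈ Icc (0:ℝ) 1, ∀ x ∈ Icc (0:ℝ) 1, ut t x + u t x * ux t x = 0)
    (hinit : ∀ x ∈ Icc (0:ℝ) 1, u 0 x = φ x) :
    ∀ t ∈ Icc (0:ℝ) 1, ∀ x ∈ Icc (0:ℝ) 1,
      (∫ z in (0:ℝ)..x, u t z) - (∫ z in (0:ℝ)..x, φ z)
        + (1/2) * ∫ τ in (0:ℝ)..t, (u τ x)^2
      = (1/2) * ∫ τ in (0:ℝ)..t, (u τ 0)^2 := by
  intro t ht x hx
  have hrect : ContinuousOn (Function.uncurry ut) (uIcc 0 t ×ˢ uIcc 0 x) := by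
    rw [uIcc_of_le ht.1, uIcc_of_le hx.1]
    exact hut.mono (prod_mono (Icc_subset_Icc_right ht.2) (Icc_subset_Icc_right hx.2))
  rw [integral_sub_integral_initial_eq_integral_integral hut hdert hderx hinit ht hx,
    ← intervalIntegral_intervalIntegral_swap_of_continuousOn hrect,
    integral_integral_ut_eq_half_integral_sq_sub hut hdert hderx hpde ht hx]
  ring

theorem burgers_implies_integral_identity
    (u ut ux : ℝ → ℝ → ℝ) (φ : ℝ → ℝ)
    (hu : ContinuousOn (fun p : ℝ × ℝ => u p.1 p.2) (Icc 0 1 ×ˢ Icc 0 1))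
    (hut : ContinuousOn (fun p : ℝ × ℝ => ut p.1 p.2) (Icc 0 1 ×ˢ Icc 0 1))
    (hux : ContinuousOn (fun p : ℝ × ℝ => ux p.1 p.2) (Icc 0 1 ×ˢ Icc 0 1))
    (hdert : ∀ t ∈ Icc (0:ℝ) 1, ∀ x ∈ Icc (0:ℝ) 1,
      HasDerivWithinAt (fun s => u s x) (ut t x) (Icc 0 1) t)
    (hderx : ∀ t ∈ Icc (0:ℝ) 1, ∀ x ∈ Icc (0:ℝ) 1,
      HasDerivWithinAt (fun y => u t y) (ux t x) (Icc 0 1) x)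
    (hpde : ∀ t ∈ Icc (0:ℝ) 1, ∀ x ∈ Icc (0:ℝ) 1, ut t x + u t x * ux t x = 0)
    (hinit : ∀ x ∈ Icc (0:ℝ) 1, u 0 x = φ x) :
    ∀ t ∈ Icc (0:ℝ) 1, ∀ x ∈ Icc (0:ℝ) 1,
      (∫ z in (0:ℝ)..x, u t z) - (∫ z in (0:ℝ)..x, φ z)
        + (1/2) * ∫ τ in (0:ℝ)..t, (u τ x)^2
      = (1/2) * ∫ τ in (0:ℝ)..t, (u τ 0)^2 :=
  burgers_implies_integral_identity_general u ut ux φ hut hdert hderx hpde hinit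
end

section
/- Let ε ∈ (0, 1/10). If u is C¹ on [0,1]×[0,1] with ‖u‖ := max(sup|u|, sup|u_t|, sup|u_x|) ≤ 1/2, φ is C¹ on [0,1] with |φ|, |φ'| ≤ 1/2, and S u(t,x) = −ε u(t,x) + ε(∫₀ˣ u(t,z) dz − ∫₀ˣ φ(z) dz + (1/2)∫₀ᵗ u(τ,x)² dτ), then S u is C¹ on [0,1]×[0,1] and ‖S u‖ ≤ 1/2. -/
/-!
The partial derivatives of `S u` are computed explicitly:
`∂ₜ S u = -ε uₜ + ε (∫₀ˣ uₜ(t,z) dz + u(t,x)²/2)` and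
`∂ₓ S u = -ε uₓ + ε (u - φ + ∫₀ᵗ u uₓ(τ,x) dτ)`.
The only non-elementary step is differentiating `∫₀ˣ u(t,z) dz` in `t` and `∫₀ᵗ u(τ,x)² dτ` in `x`
under the integral sign: writing the integrand as its initial value plus the integral of its
derivative and swapping the two integrals (Fubini) turns the parametric integral into a primitive
of a continuous function. Each of `S u`, `∂ₜ S u`, `∂ₓ S u` is then `-ε a + ε b` with `|a| ≤ 1/2`
and `|b| ≤ 5/4`, which is at most `ε · 7/4 < 1/2`.
-/

open Set intervalIntegral MeasureTheory
open scoped Interval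

universe u₁ u₂

theorem ContinuousOn.exists_continuous_eqOn {X : Type u₁} {Y : Type u₂} [TopologicalSpace X]
    [NormalSpace X] [TopologicalSpace Y] [TietzeExtension.{u₁, u₂} Y] {s : Set X}
    (hs : IsClosed s) {f : X → Y} (hf : ContinuousOn f s) :
    ∃ g : X → Y, Continuous g ∧ EqOn g f s := by
  obtain ⟨g, hg⟩ := ContinuousMap.exists_restrict_eq hs ⟨s.domRestrict f, hf.domRestrict⟩
  exact ⟨g, g.continuous, fun x hx => congr($hg ⟨x, hx⟩)⟩

theorem ContinuousOn.integral_hasDerivWithinAt_Icc {E : Type*} [NormedAddCommGroup E]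
    [NormedSpace ℝ E] [CompleteSpace E] {g : ℝ → E} {a b t : ℝ}
    (hg : ContinuousOn g (Icc a b)) (ht : t ∈ Icc a b) :
    HasDerivWithinAt (fun s => ∫ σ in a..s, g σ) (g t) (Icc a b) t := by
  have : Fact (t ∈ Icc a b) := ⟨ht⟩
  exact integral_hasDerivWithinAt_right
    ((hg.mono (uIcc_subset_Icc (left_mem_Icc.2 (ht.1.trans ht.2)) ht)).intervalIntegrable)
    (hg.stronglyMeasurableAtFilter_nhdsWithin measurableSet_Icc t) (hg t ht)

theorem intervalIntegral_integral_swap_of_continuousOn {E : Type*} [NormedAddCommGroup E]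
    [NormedSpace ℝ E] {g : ℝ → ℝ → E} {a b c d : ℝ}
    (hg : ContinuousOn (fun p : ℝ × ℝ => g p.1 p.2) ([[a, b]] ×ˢ [[c, d]])) :
    ∫ σ in a..b, ∫ z in c..d, g σ z = ∫ z in c..d, ∫ σ in a..b, g σ z := by
  simp_rw [intervalIntegral_eq_integral_uIoc, MeasureTheory.integral_smul,
    smul_comm (if c ≤ d then (1:ℝ) else -1)]
  congr 2
  apply integral_integral_swap
  rw [Measure.prod_restrict, ← Measure.volume_eq_prod]
  exact (hg.integrableOn_compact (isCompact_uIcc.prod isCompact_uIcc)).mono_set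
    (prod_mono uIoc_subset_uIcc uIoc_subset_uIcc)

theorem continuousOn_parametric_primitive_of_continuousOn {F : ℝ → ℝ → ℝ} {a b c d : ℝ}
    (hF : ContinuousOn (fun p : ℝ × ℝ => F p.1 p.2) (Icc a b ×ˢ Icc c d)) :
    ContinuousOn (fun p : ℝ × ℝ => ∫ z in c..p.2, F p.1 z) (Icc a b ×ˢ Icc c d) := by
  obtain ⟨G, hG, hGF⟩ := hF.exists_continuous_eqOn (isClosed_Icc.prod isClosed_Icc)
  have hint : Continuous fun p : ℝ × ℝ => ∫ z in c..p.2, G (p.1, z) :=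
    continuous_parametric_intervalIntegral_of_continuous (f := fun p z => G (p.1, z))
      (by fun_prop) continuous_snd
  refine hint.continuousOn.congr fun p hp => integral_congr fun z hz => ?_
  exact (hGF (show (p.1, z) ∈ Icc a b ×ˢ Icc c d from
    ⟨hp.1, uIcc_subset_Icc (left_mem_Icc.2 (hp.2.1.trans hp.2.2)) hp.2 hz⟩)).symm

theorem continuousOn_parametric_primitive_of_continuousOn_swap {F : ℝ → ℝ → ℝ}
    {a b c d : ℝ} (hF : ContinuousOn (fun p : ℝ × ℝ => F p.1 p.2) (Icc a b ×ˢ Icc c d)) :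
    ContinuousOn (fun p : ℝ × ℝ => ∫ τ in a..p.1, F τ p.2) (Icc a b ×ˢ Icc c d) :=
  (continuousOn_parametric_primitive_of_continuousOn (F := fun y τ => F τ y)
    (hF.comp continuous_swap.continuousOn fun _ hq => ⟨hq.2, hq.1⟩)).comp
    continuous_swap.continuousOn fun _ hp => ⟨hp.2, hp.1⟩

theorem hasDerivWithinAt_intervalIntegral_of_hasDerivWithinAt {f f' : ℝ → ℝ → ℝ}
    {a b c d t x : ℝ} (hfa : ContinuousOn (f a) (Icc c d))
    (hf' : ContinuousOn (fun p : ℝ × ℝ => f' p.1 p.2) (Icc a b ×ˢ Icc c d))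
    (hf : ∀ s ∈ Icc a b, ∀ z ∈ Icc c d, HasDerivWithinAt (f · z) (f' s z) (Icc a b) s)
    (ht : t ∈ Icc a b) (hx : x ∈ Icc c d) :
    HasDerivWithinAt (fun s => ∫ z in c..x, f s z) (∫ z in c..x, f' t z) (Icc a b) t := by
  have hcx : [[c, x]] ⊆ Icc c d := uIcc_subset_Icc (left_mem_Icc.2 (hx.1.trans hx.2)) hx
  have hf'z : ∀ z ∈ Icc c d, ContinuousOn (f' · z) (Icc a b) := fun z hz =>
    hf'.comp (continuousOn_id.prodMk continuousOn_const) fun σ hσ => ⟨hσ, hz⟩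
  have hftc : ∀ s ∈ Icc a b, ∀ z ∈ Icc c d, ∫ σ in a..s, f' σ z = f s z - f a z := by
    intro s hs z hz
    have hsub : Icc a s ⊆ Icc a b := Icc_subset_Icc_right hs.2
    refine integral_eq_sub_of_hasDeriv_right_of_le hs.1
      (fun σ hσ => (hf σ (hsub hσ) z hz).continuousWithinAt.mono hsub) (fun σ hσ => ?_)
      (((hf'z z hz).mono hsub).intervalIntegrable_of_Icc hs.1)
    exact ((hf σ (hsub (Ioo_subset_Icc_self hσ)) z hz).hasDerivAt
      (Icc_mem_nhds hσ.1 (hσ.2.trans_le hs.2))).hasDerivWithinAt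
  have hsplit : ∀ s ∈ Icc a b,
      ∫ z in c..x, f s z = (∫ z in c..x, f a z) + ∫ σ in a..s, ∫ z in c..x, f' σ z := by
    intro s hs
    have hrect : [[a, s]] ×ˢ [[c, x]] ⊆ Icc a b ×ˢ Icc c d :=
      prod_mono (uIcc_subset_Icc (left_mem_Icc.2 (hs.1.trans hs.2)) hs) hcx
    have hint : IntervalIntegrable (fun z => ∫ σ in a..s, f' σ z) volume c x :=
      (((continuousOn_parametric_primitive_of_continuousOn_swap hf').comp
        (continuousOn_const.prodMk continuousOn_id) fun z hz => ⟨hs, hz⟩).mono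
        hcx).intervalIntegrable
    rw [intervalIntegral_integral_swap_of_continuousOn (hf'.mono hrect),
      ← intervalIntegral.integral_add (hfa.mono hcx).intervalIntegrable hint]
    refine integral_congr fun z hz => ?_
    rw [hftc s hs z (hcx hz)]
    ring
  have hG : ContinuousOn (fun σ => ∫ z in c..x, f' σ z) (Icc a b) :=
    (continuousOn_parametric_primitive_of_continuousOn hf').comp
      (continuousOn_id.prodMk continuousOn_const) fun σ hσ => ⟨hσ, hx⟩
  exact ((hG.integral_hasDerivWithinAt_Icc ht).const_add _).congr hsplit (hsplit t ht)

theorem hasDerivWithinAt_intervalIntegral_sq {w wx : ℝ → ℝ → ℝ} {a b c d t x : ℝ}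
    (hw : ContinuousOn (fun p : ℝ × ℝ => w p.1 p.2) (Icc a b ×ˢ Icc c d))
    (hwx : ContinuousOn (fun p : ℝ × ℝ => wx p.1 p.2) (Icc a b ×ˢ Icc c d))
    (hderx : ∀ τ ∈ Icc a b, ∀ y ∈ Icc c d, HasDerivWithinAt (w τ ·) (wx τ y) (Icc c d) y)
    (ht : t ∈ Icc a b) (hx : x ∈ Icc c d) :
    HasDerivWithinAt (fun y => ∫ τ in a..t, w τ y ^ 2) (∫ τ in a..t, 2 * w τ x * wx τ x)
      (Icc c d) x := by
  have hc : c ∈ Icc c d := left_mem_Icc.2 (hx.1.trans hx.2)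
  refine hasDerivWithinAt_intervalIntegral_of_hasDerivWithinAt
    (f := fun y τ => w τ y ^ 2) (f' := fun y τ => 2 * w τ y * wx τ y)
    ((hw.comp (continuousOn_id.prodMk continuousOn_const) fun τ hτ => ⟨hτ, hc⟩).pow 2)
    (((continuousOn_const.mul hw).mul hwx).comp continuous_swap.continuousOn
      fun _ hp => ⟨hp.2, hp.1⟩)
    (fun y hy τ hτ => by simpa using (hderx τ hτ y hy).fun_pow 2) hx ht

theorem abs_intervalIntegral_le_of_abs_le {f : ℝ → ℝ} {C x : ℝ} (hx : x ∈ Icc (0:ℝ) 1)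
    (hf : ∀ z ∈ Icc (0:ℝ) 1, |f z| ≤ C) : |∫ z in (0:ℝ)..x, f z| ≤ C := by
  have hC : 0 ≤ C := (abs_nonneg _).trans (hf 0 (left_mem_Icc.2 zero_le_one))
  have hsub : Ι (0:ℝ) x ⊆ Icc 0 1 :=
    uIoc_subset_uIcc.trans (uIcc_subset_Icc (left_mem_Icc.2 zero_le_one) hx)
  calc |∫ z in (0:ℝ)..x, f z| ≤ C * |x - 0| := by
        simpa only [Real.norm_eq_abs] using norm_integral_le_of_norm_le_const (f := f)
          fun z hz => (Real.norm_eq_abs _).trans_le (hf z (hsub hz))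
    _ ≤ C * 1 := by
        gcongr
        rw [sub_zero, abs_of_nonneg hx.1]
        exact hx.2
    _ = C := mul_one C

theorem abs_sq_le_of_abs_le_half {a : ℝ} (ha : |a| ≤ 1/2) : |a ^ 2| ≤ 1/4 := by
  rw [abs_pow]
  nlinarith [abs_nonneg a]

theorem abs_two_mul_mul_le_half {a b : ℝ} (ha : |a| ≤ 1/2) (hb : |b| ≤ 1/2) :
    |2 * a * b| ≤ 1/2 := by
  rw [abs_mul, abs_mul, abs_two]
  nlinarith [abs_nonneg a, abs_nonneg b]

theorem abs_neg_mul_add_mul_le_half {ε a b : ℝ} (hε : ε ∈ Ioo (0:ℝ) (1/10)) (ha : |a| ≤ 1/2)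
    (hb : |b| ≤ 5/4) : |-ε * a + ε * b| ≤ 1/2 := by
  rw [show -ε * a + ε * b = ε * (b - a) by ring, abs_mul, abs_of_pos hε.1]
  nlinarith [abs_sub b a, abs_nonneg (b - a), hε.2]

theorem S_maps_ball_to_ball
    (ε : ℝ) (hε : ε ∈ Ioo (0:ℝ) (1/10))
    (u ut ux : ℝ → ℝ → ℝ) (φ : ℝ → ℝ)
    (hu : ContinuousOn (fun p : ℝ × ℝ => u p.1 p.2) (Icc 0 1 ×ˢ Icc 0 1))
    (hutc : ContinuousOn (fun p : ℝ × ℝ => ut p.1 p.2) (Icc 0 1 ×ˢ Icc 0 1))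
    (huxc : ContinuousOn (fun p : ℝ × ℝ => ux p.1 p.2) (Icc 0 1 ×ˢ Icc 0 1))
    (hdert : ∀ t ∈ Icc (0:ℝ) 1, ∀ x ∈ Icc (0:ℝ) 1,
      HasDerivWithinAt (fun s => u s x) (ut t x) (Icc 0 1) t)
    (hderx : ∀ t ∈ Icc (0:ℝ) 1, ∀ x ∈ Icc (0:ℝ) 1,
      HasDerivWithinAt (fun y => u t y) (ux t x) (Icc 0 1) x)
    (hub : ∀ t ∈ Icc (0:ℝ) 1, ∀ x ∈ Icc (0:ℝ) 1,
      |u t x| ≤ 1/2 ∧ |ut t x| ≤ 1/2 ∧ |ux t x| ≤ 1/2)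
    (hφ : ContDiffOn ℝ 1 φ (Icc 0 1))
    (hφb : ∀ x ∈ Icc (0:ℝ) 1, |φ x| ≤ 1/2 ∧ |derivWithin φ (Icc 0 1) x| ≤ 1/2) :
    ∃ St Sx : ℝ → ℝ → ℝ,
      let S : ℝ → ℝ → ℝ := fun t x => -ε * u t x
        + ε * ((∫ z in (0:ℝ)..x, u t z) - (∫ z in (0:ℝ)..x, φ z)
            + (1/2) * ∫ τ in (0:ℝ)..t, (u τ x)^2)
      ContinuousOn (fun p : ℝ × ℝ => St p.1 p.2) (Icc 0 1 ×ˢ Icc 0 1) ∧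
      ContinuousOn (fun p : ℝ × ℝ => Sx p.1 p.2) (Icc 0 1 ×ˢ Icc 0 1) ∧
      (∀ t ∈ Icc (0:ℝ) 1, ∀ x ∈ Icc (0:ℝ) 1,
        HasDerivWithinAt (fun s => S s x) (St t x) (Icc 0 1) t ∧
        HasDerivWithinAt (fun y => S t y) (Sx t x) (Icc 0 1) x ∧
        |S t x| ≤ 1/2 ∧ |St t x| ≤ 1/2 ∧ |Sx t x| ≤ 1/2) := by
  have h0 : (0:ℝ) ∈ Icc (0:ℝ) 1 := left_mem_Icc.2 zero_le_one
  have hu_t : ∀ t ∈ Icc (0:ℝ) 1, ContinuousOn (u t) (Icc 0 1) := fun t ht y hy =>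
    (hderx t ht y hy).continuousWithinAt
  have hu_x : ∀ x ∈ Icc (0:ℝ) 1, ContinuousOn (fun τ => u τ x) (Icc 0 1) := fun x hx τ hτ =>
    (hdert τ hτ x hx).continuousWithinAt
  refine ⟨fun t x => -ε * ut t x + ε * ((∫ z in (0:ℝ)..x, ut t z) + 1/2 * u t x ^ 2),
    fun t x => -ε * ux t x + ε * (u t x - φ x + 1/2 * ∫ τ in (0:ℝ)..t, 2 * u τ x * ux τ x),
    ?_, ?_, fun t ht x hx => ⟨?_, ?_, ?_, ?_, ?_⟩⟩
  · exact (continuousOn_const.mul hutc).add (continuousOn_const.mul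
      ((continuousOn_parametric_primitive_of_continuousOn hutc).add
        (continuousOn_const.mul (hu.pow 2))))
  · exact (continuousOn_const.mul huxc).add (continuousOn_const.mul
      ((hu.sub (hφ.continuousOn.comp continuousOn_snd fun _ hp => hp.2)).add
        (continuousOn_const.mul (continuousOn_parametric_primitive_of_continuousOn_swap
          (F := fun τ y => 2 * u τ y * ux τ y) ((continuousOn_const.mul hu).mul huxc)))))
  · have hA := hasDerivWithinAt_intervalIntegral_of_hasDerivWithinAt (hu_t 0 h0) hutc hdert ht hx
    have hB := ((hu_x x hx).pow 2).integral_hasDerivWithinAt_Icc ht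
    exact ((hdert t ht x hx).const_mul (-ε)).add
      (((hA.sub_const _).add (hB.const_mul (1/2))).const_mul ε)
  · have hA := (hu_t t ht).integral_hasDerivWithinAt_Icc hx
    have hC := hφ.continuousOn.integral_hasDerivWithinAt_Icc hx
    have hB := hasDerivWithinAt_intervalIntegral_sq hu huxc hderx ht hx
    exact ((hderx t ht x hx).const_mul (-ε)).add
      (((hA.sub hC).add (hB.const_mul (1/2))).const_mul ε)
  · have hA := abs_intervalIntegral_le_of_abs_le hx fun z hz => (hub t ht z hz).1
    have hC := abs_intervalIntegral_le_of_abs_le hx fun z hz => (hφb z hz).1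
    have hB := abs_intervalIntegral_le_of_abs_le ht fun τ hτ =>
      abs_sq_le_of_abs_le_half (hub τ hτ x hx).1
    exact abs_neg_mul_add_mul_le_half hε (hub t ht x hx).1 (by grind)
  · have hA := abs_intervalIntegral_le_of_abs_le hx fun z hz => (hub t ht z hz).2.1
    have hB := abs_sq_le_of_abs_le_half (hub t ht x hx).1
    exact abs_neg_mul_add_mul_le_half hε (hub t ht x hx).2.1 (by grind)
  · have hu1 := (hub t ht x hx).1
    have hC := (hφb x hx).1
    have hB := abs_intervalIntegral_le_of_abs_le ht fun τ hτ =>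
      abs_two_mul_mul_le_half (hub τ hτ x hx).1 (hub τ hτ x hx).2.2
    exact abs_neg_mul_add_mul_le_half hε (hub t ht x hx).2.2 (by grind)
end
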